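/- arXiv:1805.09057 — 2 statements merged into one kernel-verified Lean document; each statement's English description precedes it below -/
import Mathlib

section
/- The formal power series w(z) satisfying z = 2w(1-w^2)/(1+w^2)^2 with w(0) = 0 and w'(0) = 1/2 has only odd-degree terms; its expansion begins w = z/2 + 3z^3/8 + 22z^5/32 + 211z^7/128 + 2306z^9/512 + ⋯, i.e., with c = 2, w = z/c + 3z^3/c^3 + 22z^5/c^5 + 211z^7/c^7 + 2306z^9/c^9 + O(z^{11}). -/
/-!
Rescaling `z = 2t`, the series `a(t) = w(2t)` solves `t (1 + a²)² = a (1 - a²)`. The difference of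
this equation at two series `a`, `b` with zero constant term is `a - b` times a series with
constant term `-1`, hence a unit; so `a` is determined modulo `t ^ N` by any `b` solving the
equation modulo `t ^ N`. Since `a ↦ -a(-t)` preserves the equation, `a` is odd, and the
polynomial `t + 3t³ + 22t⁵ + 211t⁷ + 2306t⁹` solves it modulo `t¹¹`.
-/

open PowerSeries

section Defect

variable {R : Type*} [CommRing R]

noncomputable def solutionDefect (a : R⟦X⟧) : R⟦X⟧ := X * (1 + a ^ 2) ^ 2 - a * (1 - a ^ 2)

lemma constantCoeff_rescale (c : R) (f : R⟦X⟧) :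
    constantCoeff (rescale c f) = constantCoeff f := by
  rw [← coeff_zero_eq_constantCoeff_apply, coeff_rescale, pow_zero, one_mul,
    coeff_zero_eq_constantCoeff_apply]

lemma solutionDefect_sub_solutionDefect (a b : R⟦X⟧) :
    solutionDefect a - solutionDefect b =
      (a - b) * (X * (a + b) * (2 + a ^ 2 + b ^ 2) - 1 + (a ^ 2 + a * b + b ^ 2)) := by
  unfold solutionDefect
  ring

lemma isUnit_solutionDefect_factor {a b : R⟦X⟧} (ha : constantCoeff a = 0)
    (hb : constantCoeff b = 0) :
    IsUnit (X * (a + b) * (2 + a ^ 2 + b ^ 2) - 1 + (a ^ 2 + a * b + b ^ 2)) := by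
  rw [isUnit_iff_constantCoeff]
  simp [ha, hb]

lemma X_pow_dvd_sub_iff_of_solutionDefect {a b : R⟦X⟧} (ha : constantCoeff a = 0)
    (hb : constantCoeff b = 0) (N : ℕ) :
    X ^ N ∣ a - b ↔ X ^ N ∣ solutionDefect a - solutionDefect b := by
  rw [solutionDefect_sub_solutionDefect, (isUnit_solutionDefect_factor ha hb).dvd_mul_right]

lemma eq_of_solutionDefect_eq {a b : R⟦X⟧} (ha : constantCoeff a = 0)
    (hb : constantCoeff b = 0) (hab : solutionDefect a = solutionDefect b) : a = b := by
  have h := sub_eq_zero.mpr hab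
  rwa [solutionDefect_sub_solutionDefect, (isUnit_solutionDefect_factor ha hb).mul_left_eq_zero,
    sub_eq_zero] at h

lemma solutionDefect_neg_evalNegHom (a : R⟦X⟧) :
    solutionDefect (-evalNegHom a) = -evalNegHom (solutionDefect a) := by
  simp only [solutionDefect, map_sub, map_mul, map_add, map_pow, map_one, evalNegHom_X]
  ring

lemma eq_neg_evalNegHom_of_solutionDefect_eq_zero {a : R⟦X⟧} (ha0 : constantCoeff a = 0)
    (ha : solutionDefect a = 0) : a = -evalNegHom a :=
  eq_of_solutionDefect_eq ha0
    (by rw [map_neg, evalNegHom, constantCoeff_rescale, ha0, neg_zero])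
    (by rw [solutionDefect_neg_evalNegHom, ha, map_zero, neg_zero])

lemma coeff_eq_zero_of_solutionDefect_eq_zero_of_even [IsAddTorsionFree R]
    {a : R⟦X⟧} (ha0 : constantCoeff a = 0) (ha : solutionDefect a = 0) {n : ℕ} (hn : Even n) :
    coeff n a = 0 := by
  have h := congrArg (coeff n) (eq_neg_evalNegHom_of_solutionDefect_eq_zero ha0 ha)
  rw [map_neg, evalNegHom, coeff_rescale, hn.neg_one_pow, one_mul] at h
  exact self_eq_neg.mp h

noncomputable def truncatedSolution : R⟦X⟧ :=
  X + 3 * X ^ 3 + 22 * X ^ 5 + 211 * X ^ 7 + 2306 * X ^ 9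

lemma solutionDefect_truncatedSolution :
    solutionDefect (truncatedSolution : R⟦X⟧) =
      X ^ 11 * (27230 + 147834 * X ^ 2 + 1067699 * X ^ 4 + 8036595 * X ^ 6
        + 54830966 * X ^ 8 + 225358637 * X ^ 10 + 1281854138 * X ^ 12 + 7400010800 * X ^ 14
        + 37286887272 * X ^ 16 + 133970844369 * X ^ 18 + 530012838680 * X ^ 20
        + 2499576072344 * X ^ 22 + 10349523511904 * X ^ 24 + 28277252628496 * X ^ 26) := by
  unfold solutionDefect truncatedSolution
  ring

lemma coeff_eq_coeff_truncatedSolution_of_lt {a : R⟦X⟧} (ha0 : constantCoeff a = 0)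
    (ha : solutionDefect a = 0) {n : ℕ} (hn : n < 11) :
    coeff n a = coeff n (truncatedSolution : R⟦X⟧) := by
  have hdvd : X ^ 11 ∣ a - truncatedSolution := by
    rw [X_pow_dvd_sub_iff_of_solutionDefect ha0 (by simp [truncatedSolution]), ha,
      solutionDefect_truncatedSolution, zero_sub, dvd_neg]
    exact dvd_mul_right _ _
  rw [← sub_eq_zero, ← map_sub]
  exact X_pow_dvd_iff.mp hdvd n hn

lemma solutionDefect_rescale_two [NoZeroDivisors R] [NeZero (2 : R)] {w : R⟦X⟧}
    (h : X * (1 + w ^ 2) ^ 2 = 2 * w * (1 - w ^ 2)) : solutionDefect (rescale 2 w) = 0 := by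
  have h2 := congrArg (rescale (2 : R)) h
  simp only [map_mul, map_add, map_sub, map_pow, map_one, map_ofNat, rescale_X] at h2
  have : (2 : R⟦X⟧) * solutionDefect (rescale 2 w) = 0 := by
    rw [solutionDefect]
    linear_combination h2
  refine (mul_eq_zero.mp this).resolve_left fun h2 ↦ two_ne_zero (α := R) ?_
  simpa only [map_ofNat, map_zero] using congrArg constantCoeff h2

end Defect

theorem w_of_z_odd_series (w : PowerSeries ℚ)
    (h0 : PowerSeries.constantCoeff w = 0)
    (heq : (PowerSeries.X : PowerSeries ℚ) * (1 + w ^ 2) ^ 2 = 2 * w * (1 - w ^ 2)) :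
    (∀ n : ℕ, Even n → PowerSeries.coeff n w = 0) ∧
      PowerSeries.coeff 1 w = 1 / 2 ∧
      PowerSeries.coeff 3 w = 3 / 8 ∧
      PowerSeries.coeff 5 w = 22 / 32 ∧
      PowerSeries.coeff 7 w = 211 / 128 ∧
      PowerSeries.coeff 9 w = 2306 / 512 := by
  set a := rescale (2 : ℚ) w
  have ha0 : constantCoeff a = 0 := (constantCoeff_rescale 2 w).trans h0
  have ha : solutionDefect a = 0 := solutionDefect_rescale_two heq
  have hw : ∀ n, coeff n w = coeff n a / 2 ^ n := fun n ↦ by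
    rw [coeff_rescale, mul_div_cancel_left₀ _ (by positivity)]
  refine ⟨fun n hn ↦ by
    rw [hw, coeff_eq_zero_of_solutionDefect_eq_zero_of_even ha0 ha hn, zero_div], ?_⟩
  refine ⟨?_, ?_, ?_, ?_, ?_⟩ <;>
    rw [hw, coeff_eq_coeff_truncatedSolution_of_lt ha0 ha (by norm_num)] <;>
    simp [truncatedSolution, coeff_X_pow, coeff_X, ← map_ofNat C] <;> norm_num
end

section
/- For an n₁ × n₂ torus grid with n₁, n₂ > 6, the number of lattice polygons with exactly 6 edges equals 2N, where N = n₁·n₂. -/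
/-- The second endpoint offset of an edge: a horizontal edge (`true`) goes to `v + (1,0)`,
a vertical edge (`false`) to `v + (0,1)`. -/
def torusStep (n₁ n₂ : ℕ) (d : Bool) : ZMod n₁ × ZMod n₂ :=
  if d then (1, 0) else (0, 1)

/-- The degree of the vertex `v` with respect to a set `E` of edges of the torus grid:
an edge is a pair (base vertex, direction), incident to its base vertex and to
base vertex + step. -/
def torusDeg {n₁ n₂ : ℕ} (E : Finset ((ZMod n₁ × ZMod n₂) × Bool))
    (v : ZMod n₁ × ZMod n₂) : ℕ :=
  (E.filter fun e => e.1 = v ∨ e.1 + torusStep n₁ n₂ e.2 = v).card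

/-- A lattice polygon: a nonempty set of edges in which every vertex has even degree. -/
def IsLatticePolygon {n₁ n₂ : ℕ} (E : Finset ((ZMod n₁ × ZMod n₂) × Bool)) : Prop :=
  E.Nonempty ∧ ∀ v : ZMod n₁ × ZMod n₂, Even (torusDeg E v)

/-! Summing the degree condition over a column shows that adjacent columns carry horizontal edge
counts of equal parity; with fewer than `n₁` horizontal edges every column count is even. A column
with no horizontal edges on either side carries all or none of its vertical edges, so none.
Hence a 6-edge polygon with exactly two horizontal edges has both in one column `a`, its vertical
edges lie in columns `a` and `a + 1`, and these two columns carry the same vertical edges (otherwise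
together they would cover a whole column). The parity condition along column `a` then forces two
consecutive vertical edges, i.e. the boundary of a `1 × 2` rectangle. Exchanging the axes handles
four horizontal edges, while zero or six are impossible, so the 6-edge polygons are the `N`
vertical and the `N` horizontal `1 × 2` rectangles. -/

open Finset

namespace ZMod

variable {n : ℕ}

theorem iff_of_add_one_iff [NeZero n] {p : ZMod n → Prop} (h : ∀ y, p (y + 1) ↔ p y)
    (y z : ZMod n) : p y ↔ p z := by
  have hp (k : ℕ) : p k ↔ p 0 := by
    induction k with
    | zero => simp
    | succ k ih => rw [Nat.cast_succ, h, ih]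
  rw [← natCast_zmod_val y, ← natCast_zmod_val z, hp, hp]

theorem eq_empty_or_eq_univ_of_add_one_mem_iff [NeZero n] {s : Finset (ZMod n)}
    (h : ∀ y, y + 1 ∈ s ↔ y ∈ s) : s = ∅ ∨ s = univ := by
  by_cases h0 : (0 : ZMod n) ∈ s
  · exact .inr (eq_univ_of_forall fun y => (iff_of_add_one_iff h y 0).2 h0)
  · exact .inl (eq_empty_of_forall_notMem fun y hy => h0 ((iff_of_add_one_iff h y 0).1 hy))

theorem two_ne_zero_of_two_lt (hn : 2 < n) : (2 : ZMod n) ≠ 0 := by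
  exact_mod_cast (natCast_eq_zero_iff 2 n).not.2 (Nat.not_dvd_of_pos_of_lt two_pos hn)

theorem two_ne_one_of_two_lt (hn : 2 < n) : (2 : ZMod n) ≠ 1 := by
  have : Fact (1 < n) := ⟨by omega⟩
  exact fun h => one_ne_zero (by linear_combination h : (1 : ZMod n) = 0)

theorem mem_pair_add_one_iff_sub_one_mem_iff (hn : 2 < n) (b y : ZMod n) :
    (y ∈ ({b, b + 1} : Finset (ZMod n)) ↔ y - 1 ∈ ({b, b + 1} : Finset (ZMod n))) ↔
      ¬(y = b ∨ y = b + 2) := by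
  have : Fact (1 < n) := ⟨by omega⟩
  have h2 := two_ne_zero_of_two_lt hn
  have h21 := two_ne_one_of_two_lt hn
  obtain ⟨z, rfl⟩ : ∃ z, y = b + z := ⟨y - b, by abel⟩
  simp only [mem_insert, mem_singleton, add_sub_assoc, add_right_inj, add_eq_left,
    sub_eq_iff_eq_add, one_add_one_eq_two]
  by_cases hz0 : z = 0 <;> by_cases hz1 : z = 1 <;> by_cases hz2 : z = 2 <;> simp_all

theorem exists_eq_pair_add_one [Fact (1 < n)] {R Y : Finset (ZMod n)} (hR : #R = 2)
    (hY : #Y ≤ 2) (hjump : ∀ y, ¬(y ∈ R ↔ y - 1 ∈ R) → y ∈ Y) : ∃ b, R = {b, b + 1} := by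
  obtain ⟨r, s, hrs, rfl⟩ := card_eq_two.1 hR
  by_cases hs : s = r + 1
  · exact ⟨r, by rw [hs]⟩
  by_cases hr : r = s + 1
  · exact ⟨s, by rw [hr, pair_comm]⟩
  have h1 : (1 : ZMod n) ≠ 0 := one_ne_zero
  -- otherwise the indicator of `{r, s}` jumps at the three distinct points `r`, `r + 1`, `s`
  have hr₀ : r ∈ Y := hjump r (by simp [sub_eq_iff_eq_add, h1, hr])
  have hr₁ : r + 1 ∈ Y := hjump (r + 1) (by simp [h1, Ne.symm hs])
  have hs₀ : s ∈ Y := hjump s (by simp [sub_eq_iff_eq_add, h1, hs, Ne.symm hrs])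
  have := card_le_card (t := Y) (s := {r, r + 1, s}) (by simp [insert_subset_iff, *])
  rw [card_insert_of_notMem (by simp [hrs, h1]), card_pair (Ne.symm hs)] at this
  omega

end ZMod

theorem Fintype.exists_eq_two_of_sum_eq_two {ι : Type*} [Fintype ι] {f : ι → ℕ}
    (heven : ∀ i, Even (f i)) (hsum : ∑ i, f i = 2) : ∃ a, f a = 2 ∧ ∀ i ≠ a, f i = 0 := by
  obtain ⟨a, -, ha⟩ := exists_ne_zero_of_sum_ne_zero (hsum ▸ two_ne_zero)
  have hle : f a ≤ 2 := hsum ▸ single_le_sum (fun i _ => Nat.zero_le _) (mem_univ a)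
  have ha2 : f a = 2 := by obtain ⟨k, hk⟩ := heven a; omega
  refine ⟨a, ha2, fun i hi => ?_⟩
  have := add_le_sum (fun j _ => Nat.zero_le (f j)) (mem_univ i) (mem_univ a) hi
  omega

abbrev TorusEdge (n₁ n₂ : ℕ) := (ZMod n₁ × ZMod n₂) × Bool

namespace TorusEdge

variable {n₁ n₂ : ℕ}

def colH [NeZero n₂] (E : Finset (TorusEdge n₁ n₂)) (x : ZMod n₁) : Finset (ZMod n₂) :=
  {y | ((x, y), true) ∈ E}

def colV [NeZero n₂] (E : Finset (TorusEdge n₁ n₂)) (x : ZMod n₁) : Finset (ZMod n₂) :=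
  {y | ((x, y), false) ∈ E}

@[simp] theorem mem_colH [NeZero n₂] {E : Finset (TorusEdge n₁ n₂)} {x : ZMod n₁}
    {y : ZMod n₂} : y ∈ colH E x ↔ ((x, y), true) ∈ E := by
  simp [colH]

@[simp] theorem mem_colV [NeZero n₂] {E : Finset (TorusEdge n₁ n₂)} {x : ZMod n₁}
    {y : ZMod n₂} : y ∈ colV E x ↔ ((x, y), false) ∈ E := by
  simp [colV]

theorem torusDeg_eq [Fact (1 < n₁)] [Fact (1 < n₂)] (E : Finset (TorusEdge n₁ n₂))
    (x : ZMod n₁) (y : ZMod n₂) :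
    torusDeg E (x, y) = (if ((x, y), true) ∈ E then 1 else 0) +
      (if ((x - 1, y), true) ∈ E then 1 else 0) + (if ((x, y), false) ∈ E then 1 else 0) +
      (if ((x, y - 1), false) ∈ E then 1 else 0) := by
  have hinc : E.filter (fun e => e.1 = (x, y) ∨ e.1 + torusStep n₁ n₂ e.2 = (x, y)) =
      E ∩ {((x, y), true), ((x - 1, y), true), ((x, y), false), ((x, y - 1), false)} := by
    ext ⟨⟨u, w⟩, d⟩
    rw [mem_filter, mem_inter]
    refine and_congr_right fun _ => ?_
    cases d <;> simp [torusStep, Prod.ext_iff, eq_sub_iff_add_eq, or_comm]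
  have hx : x ≠ x - 1 := by simp [eq_sub_iff_add_eq]
  have hy : y ≠ y - 1 := by simp [eq_sub_iff_add_eq]
  rw [torusDeg, hinc, inter_comm, ← filter_mem_eq_inter, card_filter,
    sum_insert (by simp [hx]), sum_insert (by simp), sum_insert (by simp [hy]), sum_singleton]
  ring

theorem even_torusDeg_iff [Fact (1 < n₁)] [Fact (1 < n₂)] (E : Finset (TorusEdge n₁ n₂))
    (x : ZMod n₁) (y : ZMod n₂) :
    Even (torusDeg E (x, y)) ↔
      ((y ∈ colH E x ↔ y ∈ colH E (x - 1)) ↔ (y ∈ colV E x ↔ y - 1 ∈ colV E x)) := by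
  rw [torusDeg_eq, mem_colH, mem_colH, mem_colV, mem_colV]
  split_ifs <;> simp_all <;> decide

section Counts

variable [NeZero n₁] [NeZero n₂]

def numH (E : Finset (TorusEdge n₁ n₂)) : ℕ := ∑ x, #(colH E x)

def numV (E : Finset (TorusEdge n₁ n₂)) : ℕ := ∑ x, #(colV E x)

theorem card_eq_numH_add_numV (E : Finset (TorusEdge n₁ n₂)) : #E = numH E + numV E := by
  have : #E = ∑ e, if e ∈ E then 1 else 0 := by simp
  simp only [this, numH, numV, colH, colV, card_filter, Fintype.sum_prod_type, Fintype.sum_bool,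
    sum_add_distrib]

theorem card_colV_le_card (E : Finset (TorusEdge n₁ n₂)) (x : ZMod n₁) : #(colV E x) ≤ #E := by
  rw [card_eq_numH_add_numV]
  exact (single_le_sum (f := fun x => #(colV E x)) (fun _ _ => Nat.zero_le _) (mem_univ x)).trans
    (Nat.le_add_left _ _)

end Counts

def swap : TorusEdge n₁ n₂ ≃ TorusEdge n₂ n₁ where
  toFun e := (e.1.swap, !e.2)
  invFun e := (e.1.swap, !e.2)
  left_inv _ := by simp
  right_inv _ := by simp

@[simp] theorem mem_map_swap {E : Finset (TorusEdge n₁ n₂)} {x : ZMod n₁} {y : ZMod n₂}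
    {d : Bool} : ((y, x), d) ∈ E.map swap.toEmbedding ↔ ((x, y), !d) ∈ E :=
  mem_map_equiv

theorem map_swap_map_swap (E : Finset (TorusEdge n₁ n₂)) :
    (E.map swap.toEmbedding).map swap.toEmbedding = E := by
  ext ⟨⟨x, y⟩, d⟩
  simp only [mem_map_swap, Bool.not_not]

theorem torusDeg_map_swap (E : Finset (TorusEdge n₁ n₂)) (x : ZMod n₁) (y : ZMod n₂) :
    torusDeg (E.map swap.toEmbedding) (y, x) = torusDeg E (x, y) := by
  rw [torusDeg, torusDeg, filter_map, card_map]
  congr 1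
  refine filter_congr fun ⟨⟨u, w⟩, d⟩ _ => ?_
  cases d <;> simp [swap, torusStep, Prod.ext_iff, and_comm]

theorem _root_.IsLatticePolygon.map_swap {E : Finset (TorusEdge n₁ n₂)}
    (hE : IsLatticePolygon E) : IsLatticePolygon (E.map swap.toEmbedding) :=
  ⟨hE.1.map, fun ⟨y, x⟩ => torusDeg_map_swap E x y ▸ hE.2 (x, y)⟩

theorem numH_map_swap [NeZero n₁] [NeZero n₂] (E : Finset (TorusEdge n₁ n₂)) :
    numH (E.map swap.toEmbedding) = numV E := by
  simp only [numH, numV, colH, colV, card_filter, mem_map_swap, Bool.not_true]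
  exact sum_comm

/-- The boundary of the rectangle `[a, a + 1] × [b, b + 2]`. -/
def rectV (a : ZMod n₁) (b : ZMod n₂) : Finset (TorusEdge n₁ n₂) :=
  {((a, b), true), ((a, b + 2), true), ((a, b), false), ((a, b + 1), false),
    ((a + 1, b), false), ((a + 1, b + 1), false)}

/-- The boundary of the rectangle `[a, a + 2] × [b, b + 1]`. -/
def rectH (a : ZMod n₁) (b : ZMod n₂) : Finset (TorusEdge n₁ n₂) :=
  (rectV b a).map swap.toEmbedding

@[simp] theorem mem_rectV_true {a x : ZMod n₁} {b y : ZMod n₂} :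
    ((x, y), true) ∈ rectV a b ↔ x = a ∧ (y = b ∨ y = b + 2) := by
  simp [rectV]
  tauto

@[simp] theorem mem_rectV_false {a x : ZMod n₁} {b y : ZMod n₂} :
    ((x, y), false) ∈ rectV a b ↔ (x = a ∨ x = a + 1) ∧ (y = b ∨ y = b + 1) := by
  simp [rectV]
  tauto

theorem isLatticePolygon_rectV [Fact (1 < n₁)] (hn₂ : 2 < n₂) (a : ZMod n₁) (b : ZMod n₂) :
    IsLatticePolygon (rectV a b) := by
  have : Fact (1 < n₂) := ⟨by omega⟩
  refine ⟨⟨((a, b), true), by simp⟩, fun ⟨x, y⟩ => ?_⟩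
  have hjump := ZMod.mem_pair_add_one_iff_sub_one_mem_iff hn₂ b y
  simp only [mem_insert, mem_singleton, sub_eq_iff_eq_add] at hjump
  have ha : a + 1 ≠ a := by simp
  rw [even_torusDeg_iff]
  simp only [mem_colH, mem_colV, mem_rectV_true, mem_rectV_false, sub_eq_iff_eq_add]
  by_cases hx : x = a
  · subst hx; simpa [ha.symm] using hjump.symm
  by_cases hx' : x = a + 1
  · subst hx'; simpa [ha] using hjump.symm
  · simp [hx, hx']

theorem card_rectV [Fact (1 < n₁)] (hn₂ : 2 < n₂) (a : ZMod n₁) (b : ZMod n₂) :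
    #(rectV a b) = 6 := by
  have : Fact (1 < n₂) := ⟨by omega⟩
  simp [rectV, ZMod.two_ne_zero_of_two_lt hn₂, ZMod.two_ne_one_of_two_lt hn₂]

theorem rectV_injective (hn₂ : 2 < n₂) :
    Function.Injective fun p : ZMod n₁ × ZMod n₂ => rectV p.1 p.2 := by
  rintro ⟨a, b⟩ ⟨a', b'⟩ (h : rectV a b = rectV a' b')
  have hT : ((a', b'), true) ∈ rectV a b := h ▸ by simp
  have hF : ((a', b'), false) ∈ rectV a b := h ▸ by simp
  simp only [mem_rectV_true, mem_rectV_false] at hT hF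
  obtain ⟨rfl, rfl | rfl⟩ := hT
  · rfl
  · simp [ZMod.two_ne_zero_of_two_lt hn₂, ZMod.two_ne_one_of_two_lt hn₂] at hF

theorem rectH_injective (hn₁ : 2 < n₁) :
    Function.Injective fun p : ZMod n₁ × ZMod n₂ => rectH p.1 p.2 := by
  rintro ⟨a, b⟩ ⟨a', b'⟩ h
  obtain ⟨⟩ : (b, a) = (b', a') := rectV_injective hn₁ (map_injective _ h)
  rfl

theorem rectV_ne_rectH [Fact (1 < n₁)] (a : ZMod n₁) (b : ZMod n₂) (a' : ZMod n₁)
    (b' : ZMod n₂) : rectV a b ≠ rectH a' b' := by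
  intro h
  have h₀ : ((a', b'), true) ∈ rectV a b := h ▸ by rw [rectH, mem_map_swap]; simp
  have h₁ : ((a' + 1, b'), true) ∈ rectV a b := h ▸ by rw [rectH, mem_map_swap]; simp
  simp only [mem_rectV_true] at h₀ h₁
  simp [← h₀.1] at h₁

variable [Fact (1 < n₁)] [Fact (1 < n₂)] {E : Finset (TorusEdge n₁ n₂)}

theorem even_card_colH_add_card_colH_sub_one (hE : ∀ v, Even (torusDeg E v)) (x : ZMod n₁) :
    Even (#(colH E x) + #(colH E (x - 1))) := by
  have hsum : ∑ y, torusDeg E (x, y) = #(colH E x) + #(colH E (x - 1)) + 2 * #(colV E x) := by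
    have hshift : ∑ y : ZMod n₂, (if ((x, y - 1), false) ∈ E then 1 else 0) = #(colV E x) := by
      rw [colV, card_filter]
      exact (Equiv.subRight 1).sum_comp fun y => if ((x, y), false) ∈ E then 1 else 0
    simp only [torusDeg_eq, sum_add_distrib, hshift, colH, colV, card_filter]
    ring
  have heven : Even (∑ y, torusDeg E (x, y)) := even_sum _ fun y _ => hE (x, y)
  rw [hsum] at heven
  exact (Nat.even_add.1 heven).2 (even_two_mul _)

theorem even_card_colH (hE : ∀ v, Even (torusDeg E v)) (hH : numH E < n₁) (x : ZMod n₁) :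
    Even #(colH E x) := by
  have hstep (x : ZMod n₁) : Even #(colH E (x + 1)) ↔ Even #(colH E x) := by
    simpa [Nat.even_add] using even_card_colH_add_card_colH_sub_one hE (x + 1)
  by_contra hx
  have hpos (z : ZMod n₁) : 1 ≤ #(colH E z) := by
    by_contra h0
    exact hx ((ZMod.iff_of_add_one_iff (p := fun z => Even #(colH E z)) hstep z x).1
      (by simp_all))
  have : n₁ ≤ numH E := by
    simpa [numH] using card_nsmul_le_sum univ (fun z => #(colH E z)) 1 fun z _ => hpos z
  omega

theorem colV_eq_empty (hE : ∀ v, Even (torusDeg E v)) (hcard : #E < n₂) {x : ZMod n₁}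
    (hx : colH E x = ∅) (hx' : colH E (x - 1) = ∅) : colV E x = ∅ := by
  have hshift (y : ZMod n₂) : y + 1 ∈ colV E x ↔ y ∈ colV E x := by
    simpa [hx, hx'] using (even_torusDeg_iff E x (y + 1)).1 (hE _)
  refine (ZMod.eq_empty_or_eq_univ_of_add_one_mem_iff hshift).resolve_right fun huniv => ?_
  have := card_colV_le_card E x
  rw [huniv, card_univ, ZMod.card] at this
  omega

theorem mem_colH_iff_of_colH_sub_one_eq_empty (hE : ∀ v, Even (torusDeg E v)) {x : ZMod n₁}
    (hx : colH E (x - 1) = ∅) (y : ZMod n₂) :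
    y ∈ colH E x ↔ ¬(y ∈ colV E x ↔ y - 1 ∈ colV E x) := by
  have h := (even_torusDeg_iff E x y).1 (hE _)
  simp only [hx, notMem_empty, iff_false] at h
  tauto

theorem colV_add_one_eq_colV (hE : ∀ v, Even (torusDeg E v)) {a : ZMod n₁}
    (hcol : ∀ x ≠ a, colH E x = ∅) (hlt : #(colV E a) + #(colV E (a + 1)) < n₂) :
    colV E (a + 1) = colV E a := by
  have hshift (y : ZMod n₂) : (y + 1 ∈ colV E a ↔ y + 1 ∈ colV E (a + 1)) ↔
      (y ∈ colV E a ↔ y ∈ colV E (a + 1)) := by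
    have ha := (even_torusDeg_iff E a (y + 1)).1 (hE _)
    have ha' := (even_torusDeg_iff E (a + 1) (y + 1)).1 (hE _)
    simp only [hcol (a - 1) (by simp), hcol (a + 1) (by simp), add_sub_cancel_right,
      notMem_empty] at ha ha'
    tauto
  have hconst :=
    ZMod.iff_of_add_one_iff (p := fun y => y ∈ colV E a ↔ y ∈ colV E (a + 1)) hshift
  by_cases h0 : (0 ∈ colV E a ↔ 0 ∈ colV E (a + 1))
  · ext y
    exact ((hconst y 0).2 h0).symm
  · have hcover : univ ⊆ colV E a ∪ colV E (a + 1) := fun y _ => by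
      have := (hconst y 0).not.2 h0
      rw [mem_union]
      tauto
    have := (card_le_card hcover).trans (card_union_le _ _)
    rw [card_univ, ZMod.card] at this
    omega

theorem exists_card_colH_eq_two_of_numH_eq_two (hE : ∀ v, Even (torusDeg E v)) (hn₁ : 2 < n₁)
    (hH : numH E = 2) : ∃ a, #(colH E a) = 2 ∧ ∀ x ≠ a, colH E x = ∅ := by
  obtain ⟨a, ha, h0⟩ :=
    Fintype.exists_eq_two_of_sum_eq_two (even_card_colH hE (by omega)) hH
  exact ⟨a, ha, fun x hx => card_eq_zero.1 (h0 x hx)⟩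

theorem exists_eq_rectV_of_numH_eq_two (hn₁ : 2 < n₁) (hn₂ : 6 < n₂) (hE : IsLatticePolygon E)
    (hcard : #E = 6) (hH : numH E = 2) : ∃ a b, E = rectV a b := by
  obtain ⟨a, ha, hcol⟩ := exists_card_colH_eq_two_of_numH_eq_two hE.2 hn₁ hH
  have hfar : ∀ x, x ≠ a → x ≠ a + 1 → colV E x = ∅ := fun x hx hx' =>
    colV_eq_empty hE.2 (by omega) (hcol x hx) (hcol (x - 1) (by rwa [ne_eq, sub_eq_iff_eq_add]))
  have hV : #(colV E a) + #(colV E (a + 1)) = 4 := by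
    have := card_eq_numH_add_numV E
    rw [numV, Fintype.sum_eq_add a (a + 1) (by simp) fun x hx => by simp [hfar x hx.1 hx.2]]
      at this
    omega
  have hsame := colV_add_one_eq_colV hE.2 hcol (by omega)
  have hjump := mem_colH_iff_of_colH_sub_one_eq_empty hE.2 (hcol (a - 1) (by simp))
  obtain ⟨b, hb⟩ := ZMod.exists_eq_pair_add_one (R := colV E a) (by rw [hsame] at hV; omega)
    ha.le fun y hy => (hjump y).2 hy
  have hHa (y : ZMod n₂) : y ∈ colH E a ↔ y = b ∨ y = b + 2 := by
    rw [hjump, hb, ZMod.mem_pair_add_one_iff_sub_one_mem_iff (by omega), not_not]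
  refine ⟨a, b, ?_⟩
  ext ⟨⟨x, y⟩, d⟩
  cases d
  · rw [← mem_colV, mem_rectV_false]
    by_cases hx : x = a
    · simp [hx, hb]
    by_cases hx' : x = a + 1
    · simp [hx', hsame, hb]
    · simp [hx, hx', hfar x hx hx']
  · rw [← mem_colH, mem_rectV_true]
    by_cases hx : x = a
    · simp [hx, hHa]
    · simp [hx, hcol x hx]

theorem numH_ne_zero (hE : IsLatticePolygon E) (hcard : #E < n₂) : numH E ≠ 0 := by
  intro h0
  have hcol (x : ZMod n₁) : colH E x = ∅ := card_eq_zero.1 (sum_eq_zero_iff.1 h0 x (mem_univ x))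
  obtain ⟨⟨⟨x, y⟩, d⟩, he⟩ := hE.1
  cases d
  · simpa [colV_eq_empty hE.2 hcard (hcol x) (hcol (x - 1))] using mem_colV.2 he
  · simpa [hcol x] using mem_colH.2 he

theorem eq_rectV_or_eq_rectH (hn₁ : 6 < n₁) (hn₂ : 6 < n₂) (hE : IsLatticePolygon E)
    (hcard : #E = 6) : (∃ a b, E = rectV a b) ∨ ∃ a b, E = rectH a b := by
  have hsplit := card_eq_numH_add_numV E
  obtain ⟨k, hk⟩ : Even (numH E) := even_sum _ fun x _ => even_card_colH hE.2 (by omega) x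
  have hH := numH_ne_zero hE (by omega)
  have hV : numV E ≠ 0 := numH_map_swap E ▸ numH_ne_zero hE.map_swap (by rw [card_map]; omega)
  rcases (by omega : numH E = 2 ∨ numV E = 2) with h2 | h2
  · exact .inl (exists_eq_rectV_of_numH_eq_two (by omega) hn₂ hE hcard h2)
  · obtain ⟨b, a, hba⟩ := exists_eq_rectV_of_numH_eq_two (by omega) hn₁ hE.map_swap
      (by rw [card_map, hcard]) (by rw [numH_map_swap, h2])
    exact .inr ⟨a, b, by rw [rectH, ← hba, map_swap_map_swap]⟩

theorem setOf_isLatticePolygon_card_eq_six (hn₁ : 6 < n₁) (hn₂ : 6 < n₂) :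
    {E : Finset (TorusEdge n₁ n₂) | IsLatticePolygon E ∧ #E = 6} =
      Set.range (Sum.elim (fun p : ZMod n₁ × ZMod n₂ => rectV p.1 p.2)
        fun p : ZMod n₁ × ZMod n₂ => rectH p.1 p.2) := by
  ext E
  constructor
  · rintro ⟨hE, hcard⟩
    rcases eq_rectV_or_eq_rectH hn₁ hn₂ hE hcard with ⟨a, b, rfl⟩ | ⟨a, b, rfl⟩
    exacts [⟨.inl (a, b), rfl⟩, ⟨.inr (a, b), rfl⟩]
  · rintro ⟨⟨a, b⟩ | ⟨a, b⟩, rfl⟩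
    · exact ⟨isLatticePolygon_rectV (by omega) a b, card_rectV (by omega) a b⟩
    · exact ⟨(isLatticePolygon_rectV (by omega) b a).map_swap,
        (card_map _).trans (card_rectV (by omega) b a)⟩

end TorusEdge

open TorusEdge in
theorem polygons_six_edges (n₁ n₂ : ℕ) (h₁ : 6 < n₁) (h₂ : 6 < n₂) :
    {E : Finset ((ZMod n₁ × ZMod n₂) × Bool) | IsLatticePolygon E ∧ E.card = 6}.ncard =
      2 * (n₁ * n₂) := by
  have : Fact (1 < n₁) := ⟨by omega⟩
  have : Fact (1 < n₂) := ⟨by omega⟩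
  rw [setOf_isLatticePolygon_card_eq_six h₁ h₂, Set.ncard_range_of_injective
    ((rectV_injective (by omega)).sumElim (rectH_injective (by omega))
      fun _ _ => rectV_ne_rectH _ _ _ _)]
  simp only [Nat.card_sum, Nat.card_prod, Nat.card_zmod]
  ring
end
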